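/- Let V be a complex Hilbert space, a bounded coercive, b a bounded sesquilinear form. Let (λ,u) with a(u,v) = λb(u,v) for all v ∈ V, and (λ̄,u*) with a(v,u*) = λb(v,u*) for all v ∈ V. Suppose w, w* ∈ V satisfy ‖w − u‖ ≤ ε, ‖w* − u*‖ ≤ ε*, |b(w,w*)| ≥ β > 0. Then |a(w,w*)/b(w,w*) − λ| ≤ β⁻¹(M₁ + |λ|M₂)·ε·ε*, where M₁, M₂ are the continuity constants of a and b. -/

import Mathlib

/-! Since `u` is a right and `u⋆` a left eigenvector for `λ`, the residual form `a - λ b`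
annihilates `u` in its first and `u⋆` in its second argument. Hence
`a(w, w⋆) - λ b(w, w⋆) = (a - λ b)(w - u, w⋆ - u⋆)`, which is bounded by
`(M₁ + |λ| M₂) ε ε⋆` by continuity alone; dividing by `b(w, w⋆)` gives the bound. -/

theorem residual_eq_residual_sub_eigenvectors {V R : Type*} [Sub V] [CommRing R]
    (a b : V → V → R)
    (ha_sub_left : ∀ x y z : V, a (x - y) z = a x z - a y z)
    (ha_sub_right : ∀ x y z : V, a x (y - z) = a x y - a x z)
    (hb_sub_left : ∀ x y z : V, b (x - y) z = b x z - b y z)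
    (hb_sub_right : ∀ x y z : V, b x (y - z) = b x y - b x z)
    (lam : R) (u ustar : V)
    (hu : ∀ v : V, a u v = lam * b u v)
    (hustar : ∀ v : V, a v ustar = lam * b v ustar)
    (w wstar : V) :
    a w wstar - lam * b w wstar =
      a (w - u) (wstar - ustar) - lam * b (w - u) (wstar - ustar) := by
  rw [ha_sub_left, ha_sub_right, ha_sub_right, hb_sub_left, hb_sub_right, hb_sub_right,
    hu, hu, hustar]
  ring

theorem norm_residual_le {V 𝕜 : Type*} [Norm V] [NormedField 𝕜]
    (a b : V → V → 𝕜) (M₁ M₂ : ℝ)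
    (ha_bdd : ∀ u v : V, ‖a u v‖ ≤ M₁ * ‖u‖ * ‖v‖)
    (hb_bdd : ∀ u v : V, ‖b u v‖ ≤ M₂ * ‖u‖ * ‖v‖)
    (lam : 𝕜) (x y : V) :
    ‖a x y - lam * b x y‖ ≤ (M₁ + ‖lam‖ * M₂) * ‖x‖ * ‖y‖ :=
  calc ‖a x y - lam * b x y‖ ≤ ‖a x y‖ + ‖lam‖ * ‖b x y‖ := by
        rw [← norm_mul]; exact norm_sub_le _ _
    _ ≤ M₁ * ‖x‖ * ‖y‖ + ‖lam‖ * (M₂ * ‖x‖ * ‖y‖) := by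
        gcongr
        exacts [ha_bdd x y, hb_bdd x y]
    _ = (M₁ + ‖lam‖ * M₂) * ‖x‖ * ‖y‖ := by ring

theorem rayleigh_quotient_error_bound_general
    {V : Type*} [NormedAddCommGroup V]
    (a b : V → V → ℂ) (M₁ M₂ : ℝ) (hM₁ : 0 < M₁) (hM₂ : 0 < M₂)
    (ha_sub_left : ∀ x y z : V, a (x - y) z = a x z - a y z)
    (ha_sub_right : ∀ x y z : V, a x (y - z) = a x y - a x z)
    (hb_sub_left : ∀ x y z : V, b (x - y) z = b x z - b y z)
    (hb_sub_right : ∀ x y z : V, b x (y - z) = b x y - b x z)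
    (ha_bdd : ∀ u v : V, ‖a u v‖ ≤ M₁ * ‖u‖ * ‖v‖)
    (hb_bdd : ∀ u v : V, ‖b u v‖ ≤ M₂ * ‖u‖ * ‖v‖)
    (lam : ℂ) (u ustar : V)
    (hu : ∀ v : V, a u v = lam * b u v)
    (hustar : ∀ v : V, a v ustar = lam * b v ustar)
    (w wstar : V) (ε εstar β : ℝ) (hβ : 0 < β)
    (hw : ‖w - u‖ ≤ ε) (hwstar : ‖wstar - ustar‖ ≤ εstar)
    (hbw : β ≤ ‖b w wstar‖) :
    ‖a w wstar / b w wstar - lam‖ ≤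
      β⁻¹ * (M₁ + ‖lam‖ * M₂) * ε * εstar := by
  have hb_ne : b w wstar ≠ 0 := norm_pos_iff.mp (hβ.trans_le hbw)
  have hε : 0 ≤ ε := (norm_nonneg _).trans hw
  have hnum : ‖a (w - u) (wstar - ustar) - lam * b (w - u) (wstar - ustar)‖ ≤
      (M₁ + ‖lam‖ * M₂) * ε * εstar :=
    (norm_residual_le a b M₁ M₂ ha_bdd hb_bdd lam _ _).trans (by gcongr)
  calc ‖a w wstar / b w wstar - lam‖
      = ‖a (w - u) (wstar - ustar) - lam * b (w - u) (wstar - ustar)‖ / ‖b w wstar‖ := by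
        rw [div_sub' hb_ne, mul_comm, norm_div,
          residual_eq_residual_sub_eigenvectors a b ha_sub_left ha_sub_right hb_sub_left
            hb_sub_right lam u ustar hu hustar]
    _ ≤ (M₁ + ‖lam‖ * M₂) * ε * εstar / β :=
        div_le_div₀ ((norm_nonneg _).trans hnum) hnum hβ hbw
    _ = β⁻¹ * (M₁ + ‖lam‖ * M₂) * ε * εstar := by ring

/-- Quantitative eigenvalue error bound from the Rayleigh quotient identity:
if `‖w − u‖ ≤ ε`, `‖w⋆ − u⋆‖ ≤ ε⋆` and `|b(w, w⋆)| ≥ β > 0`, then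
`|a(w,w⋆)/b(w,w⋆) − λ| ≤ β⁻¹ (M₁ + |λ| M₂) ε ε⋆`. -/
theorem rayleigh_quotient_error_bound
    {V : Type*} [NormedAddCommGroup V] [InnerProductSpace ℂ V] [CompleteSpace V]
    (a b : V → V → ℂ) (α M₁ M₂ : ℝ) (hα : 0 < α) (hM₁ : 0 < M₁) (hM₂ : 0 < M₂)
    (ha_sub_left : ∀ x y z : V, a (x - y) z = a x z - a y z)
    (ha_sub_right : ∀ x y z : V, a x (y - z) = a x y - a x z)
    (hb_sub_left : ∀ x y z : V, b (x - y) z = b x z - b y z)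
    (hb_sub_right : ∀ x y z : V, b x (y - z) = b x y - b x z)
    (hcoer : ∀ u : V, α * ‖u‖ ^ 2 ≤ (a u u).re)
    (ha_bdd : ∀ u v : V, ‖a u v‖ ≤ M₁ * ‖u‖ * ‖v‖)
    (hb_bdd : ∀ u v : V, ‖b u v‖ ≤ M₂ * ‖u‖ * ‖v‖)
    (lam : ℂ) (u ustar : V)
    (hu : ∀ v : V, a u v = lam * b u v)
    (hustar : ∀ v : V, a v ustar = lam * b v ustar)
    (w wstar : V) (ε εstar β : ℝ) (hβ : 0 < β)
    (hw : ‖w - u‖ ≤ ε) (hwstar : ‖wstar - ustar‖ ≤ εstar)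
    (hbw : β ≤ ‖b w wstar‖) :
    ‖a w wstar / b w wstar - lam‖ ≤
      β⁻¹ * (M₁ + ‖lam‖ * M₂) * ε * εstar :=
  rayleigh_quotient_error_bound_general a b M₁ M₂ hM₁ hM₂ ha_sub_left ha_sub_right hb_sub_left
    hb_sub_right ha_bdd hb_bdd lam u ustar hu hustar w wstar ε εstar β hβ hw hwstar hbw
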